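/- arXiv:1511.09276 — 2 statements merged into one kernel-verified Lean document; each statement's English description precedes it below -/
import Mathlib

section
/- Let X ⊆ ℂ be a compact set and let F be an effective collection of Lipschitz paths in X. Let f₁, f₂, g₁, g₂ : ℂ → ℂ be continuous on X, with g₁ an F-derivative of f₁ and g₂ an F-derivative of f₂. Then f₁·g₂ + g₁·f₂ is an F-derivative of the product f₁·f₂. -/
open Set intervalIntegral Filter

noncomputable section

/-- A path datum: a function `ℝ → ℂ` together with its parameter interval endpoints. -/
abbrev PathData := (ℝ → ℂ) × ℝ × ℝ

/-- `p` is a (rectifiable, modelled as Lipschitz) path in `X`. -/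
def IsLipPathIn (X : Set ℂ) (p : PathData) : Prop :=
  p.2.1 < p.2.2 ∧ (∃ K : NNReal, LipschitzOnWith K p.1 (Set.Icc p.2.1 p.2.2)) ∧
    p.1 '' Set.Icc p.2.1 p.2.2 ⊆ X

/-- `g` is an `F`-derivative of `f`. -/
def IsFDeriv (F : Set PathData) (f g : ℂ → ℂ) : Prop :=
  ∀ p ∈ F, (∫ t in p.2.1..p.2.2, g (p.1 t) * deriv p.1 t) = f (p.1 p.2.2) - f (p.1 p.2.1)

/-- `g` is a `γ`-derivative of `f` on `[a,b]`: the fundamental-theorem identity holds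
along every closed subinterval of `[a,b]`. -/
def IsPathDeriv (γ : ℝ → ℂ) (a b : ℝ) (f g : ℂ → ℂ) : Prop :=
  ∀ c d : ℝ, a ≤ c → c ≤ d → d ≤ b →
    (∫ t in c..d, g (γ t) * deriv γ t) = f (γ d) - f (γ c)

/-- `γ` is admissible on `[a,b]`: nonconstant on every nondegenerate closed subinterval. -/
def AdmissiblePath (γ : ℝ → ℂ) (a b : ℝ) : Prop :=
  ∀ c d : ℝ, a ≤ c → c < d → d ≤ b →
    ∃ s ∈ Set.Icc c d, ∃ t ∈ Set.Icc c d, γ s ≠ γ t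

/-- `F` is closed under subpaths. -/
def ClosedUnderSubpaths (F : Set PathData) : Prop :=
  ∀ p ∈ F, ∀ c d : ℝ, p.2.1 ≤ c → c < d → d ≤ p.2.2 → ((p.1, c, d) : PathData) ∈ F

/-- `F` is an effective collection of paths in `X`. -/
def Effective (X : Set ℂ) (F : Set PathData) : Prop :=
  (∀ p ∈ F, IsLipPathIn X p ∧ AdmissiblePath p.1 p.2.1 p.2.2) ∧
  ClosedUnderSubpaths F ∧
  X ⊆ closure (⋃ p ∈ F, p.1 '' Set.Icc p.2.1 p.2.2)

/-- The maximal collection `F^max` generated by `F`. -/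
def MaxColl (X : Set ℂ) (F : Set PathData) : Set PathData :=
  {p | IsLipPathIn X p ∧ AdmissiblePath p.1 p.2.1 p.2.2 ∧
    ∀ f g : ℂ → ℂ, ContinuousOn f X → ContinuousOn g X → IsFDeriv F f g →
      IsPathDeriv p.1 p.2.1 p.2.2 f g}

/-- The uniform norm of `u` over `X`. -/
def supOn (u : ℂ → ℂ) (X : Set ℂ) : ℝ :=
  sSup ((fun x => ‖u x‖) '' X)

end

/-! Along a path `γ` of `F` on `[a, b]`, closedness under subpaths says that `fᵢ ∘ γ` is an
indefinite integral of `uᵢ = (gᵢ ∘ γ) * γ'`, which is integrable since `γ'` is bounded by the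
Lipschitz constant. The claim is then the product rule for indefinite integrals
`Uᵢ t = ∫ s in a..t, uᵢ s`, namely `∫ t in a..b, U₁ t * u₂ t + u₁ t * U₂ t = U₁ b * U₂ b`, and this
is Fubini's theorem for `u₁ s * u₂ t` on the triangle `a ≤ s ≤ t ≤ b`. -/

open MeasureTheory

theorem LipschitzOnWith.intervalIntegrable_deriv {E : Type*} [NormedAddCommGroup E]
    [NormedSpace ℝ E] [CompleteSpace E] {γ : ℝ → E} {K : NNReal} {a b : ℝ}
    (hγ : LipschitzOnWith K γ (uIcc a b)) : IntervalIntegrable (deriv γ) volume a b := by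
  wlog hab : a ≤ b generalizing a b
  · exact (this (uIcc_comm a b ▸ hγ) (le_of_not_ge hab)).symm
  rw [uIcc_of_le hab] at hγ
  rw [intervalIntegrable_iff_integrableOn_Ioo_of_le hab]
  refine Measure.integrableOn_of_bounded (M := K) measure_Ioo_lt_top.ne
    (stronglyMeasurable_deriv γ).aestronglyMeasurable ?_
  filter_upwards [ae_restrict_mem measurableSet_Ioo] with t ht
  exact norm_deriv_le_of_lipschitzOn (Icc_mem_nhds ht.1 ht.2) hγ

section PrimitiveProduct

variable {𝕜 : Type*} [RCLike 𝕜] {u₁ u₂ : ℝ → 𝕜} {a b : ℝ}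

theorem integral_primitive_mul_eq_integral_mul_integral (hab : a ≤ b)
    (hu₁ : IntervalIntegrable u₁ volume a b) (hu₂ : IntervalIntegrable u₂ volume a b) :
    ∫ t in a..b, (∫ s in a..t, u₁ s) * u₂ t = ∫ s in a..b, u₁ s * ∫ t in s..b, u₂ t := by
  set μ := volume.restrict (Icc a b)
  have hμ₁ : Integrable u₁ μ := (intervalIntegrable_iff_integrableOn_Icc_of_le hab).1 hu₁
  have hμ₂ : Integrable u₂ μ := (intervalIntegrable_iff_integrableOn_Icc_of_le hab).1 hu₂
  set Φ : ℝ × ℝ → 𝕜 := {q | q.1 ≤ q.2}.indicator fun q => u₁ q.1 * u₂ q.2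
  have hΦ : Integrable Φ (μ.prod μ) :=
    (hμ₁.mul_prod hμ₂).indicator (measurableSet_le measurable_fst measurable_snd)
  have hrow : ∀ s ∈ Icc a b, ∫ t, Φ (s, t) ∂μ = u₁ s * ∫ t in s..b, u₂ t := by
    intro s hs
    have hslice : (fun t => Φ (s, t)) = (Ici s).indicator fun t => u₁ s * u₂ t := by
      ext t; simp [Φ, indicator_apply]
    have hset : Ici s ∩ Icc a b = Icc s b := by
      ext x; simp only [mem_inter_iff, mem_Ici, mem_Icc]; grind
    rw [hslice, MeasureTheory.integral_indicator measurableSet_Ici,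
      Measure.restrict_restrict measurableSet_Ici, hset, MeasureTheory.integral_const_mul,
      integral_Icc_eq_integral_Ioc, ← integral_of_le hs.2]
  have hcol : ∀ t ∈ Icc a b, ∫ s, Φ (s, t) ∂μ = (∫ s in a..t, u₁ s) * u₂ t := by
    intro t ht
    have hslice : (fun s => Φ (s, t)) = (Iic t).indicator fun s => u₁ s * u₂ t := by
      ext s; simp [Φ, indicator_apply]
    have hset : Iic t ∩ Icc a b = Icc a t := by
      ext x; simp only [mem_inter_iff, mem_Iic, mem_Icc]; grind
    rw [hslice, MeasureTheory.integral_indicator measurableSet_Iic,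
      Measure.restrict_restrict measurableSet_Iic, hset, MeasureTheory.integral_mul_const,
      integral_Icc_eq_integral_Ioc, ← integral_of_le ht.1]
  rw [integral_of_le hab, integral_of_le hab, ← integral_Icc_eq_integral_Ioc,
    ← integral_Icc_eq_integral_Ioc, ← setIntegral_congr_fun measurableSet_Icc hcol,
    ← setIntegral_congr_fun measurableSet_Icc hrow]
  exact (integral_integral_swap (f := fun s t => Φ (s, t)) hΦ).symm

theorem IntervalIntegrable.primitive_mul (hu₁ : IntervalIntegrable u₁ volume a b)
    (hu₂ : IntervalIntegrable u₂ volume a b) :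
    IntervalIntegrable (fun t => (∫ s in a..t, u₁ s) * u₂ t) volume a b :=
  hu₂.continuousOn_mul (continuousOn_primitive_interval' hu₁ left_mem_uIcc)

theorem IntervalIntegrable.mul_primitive (hu₁ : IntervalIntegrable u₁ volume a b)
    (hu₂ : IntervalIntegrable u₂ volume a b) :
    IntervalIntegrable (fun t => u₁ t * ∫ s in a..t, u₂ s) volume a b :=
  hu₁.mul_continuousOn (continuousOn_primitive_interval' hu₂ left_mem_uIcc)

theorem integral_primitive_mul_add_mul_primitive (hab : a ≤ b)
    (hu₁ : IntervalIntegrable u₁ volume a b) (hu₂ : IntervalIntegrable u₂ volume a b) :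
    ∫ t in a..b, ((∫ s in a..t, u₁ s) * u₂ t + u₁ t * ∫ s in a..t, u₂ s) =
      (∫ t in a..b, u₁ t) * ∫ t in a..b, u₂ t := by
  have hswap := integral_primitive_mul_eq_integral_mul_integral hab hu₁ hu₂
  have htail : ∀ s ∈ uIcc a b, u₁ s * ∫ t in s..b, u₂ t =
      u₁ s * (∫ t in a..b, u₂ t) - u₁ s * ∫ t in a..s, u₂ t := fun s hs => by
    rw [← integral_interval_sub_left hu₂ (hu₂.mono_set (uIcc_subset_uIcc left_mem_uIcc hs)),
      mul_sub]
  rw [integral_congr htail, integral_sub (hu₁.mul_const _) (hu₁.mul_primitive hu₂),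
    intervalIntegral.integral_mul_const] at hswap
  rw [integral_add (hu₁.primitive_mul hu₂) (hu₁.mul_primitive hu₂), hswap]
  ring

theorem integral_mul_add_mul_eq_sub_of_integral_eq_sub {φ₁ φ₂ : ℝ → 𝕜} (hab : a ≤ b)
    (hu₁ : IntervalIntegrable u₁ volume a b) (hu₂ : IntervalIntegrable u₂ volume a b)
    (hφ₁ : ∀ t ∈ Icc a b, ∫ s in a..t, u₁ s = φ₁ t - φ₁ a)
    (hφ₂ : ∀ t ∈ Icc a b, ∫ s in a..t, u₂ s = φ₂ t - φ₂ a) :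
    ∫ t in a..b, (φ₁ t * u₂ t + u₁ t * φ₂ t) = φ₁ b * φ₂ b - φ₁ a * φ₂ a := by
  have hsplit : EqOn (fun t => φ₁ t * u₂ t + u₁ t * φ₂ t)
      (fun t => (φ₁ a * u₂ t + u₁ t * φ₂ a) +
        ((∫ s in a..t, u₁ s) * u₂ t + u₁ t * ∫ s in a..t, u₂ s)) (uIcc a b) := fun t ht => by
    rw [uIcc_of_le hab] at ht
    simp only [hφ₁ t ht, hφ₂ t ht]
    ring
  rw [integral_congr hsplit, integral_add ((hu₂.const_mul _).add (hu₁.mul_const _))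
      ((hu₁.primitive_mul hu₂).add (hu₁.mul_primitive hu₂)),
    integral_add (hu₂.const_mul _) (hu₁.mul_const _), intervalIntegral.integral_const_mul,
    intervalIntegral.integral_mul_const, integral_primitive_mul_add_mul_primitive hab hu₁ hu₂,
    hφ₁ b (right_mem_Icc.2 hab), hφ₂ b (right_mem_Icc.2 hab)]
  ring

end PrimitiveProduct

theorem IsLipPathIn.intervalIntegrable_comp_mul_deriv {X : Set ℂ} {p : PathData}
    (hp : IsLipPathIn X p) {g : ℂ → ℂ} (hg : ContinuousOn g X) :
    IntervalIntegrable (fun t => g (p.1 t) * deriv p.1 t) volume p.2.1 p.2.2 := by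
  obtain ⟨hab, ⟨K, hK⟩, himg⟩ := hp
  rw [← uIcc_of_le hab.le] at hK himg
  exact hK.intervalIntegrable_deriv.continuousOn_mul
    (hg.comp hK.continuousOn fun t ht => himg (mem_image_of_mem _ ht))

theorem IsFDeriv.integral_eq_sub {F : Set PathData} {f g : ℂ → ℂ} (hfg : IsFDeriv F f g)
    (hF : ClosedUnderSubpaths F) {p : PathData} (hp : p ∈ F) {t : ℝ}
    (ht : t ∈ Icc p.2.1 p.2.2) :
    ∫ s in p.2.1..t, g (p.1 s) * deriv p.1 s = f (p.1 t) - f (p.1 p.2.1) := by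
  rcases ht.1.eq_or_lt with rfl | hlt
  · simp
  · exact hfg _ (hF p hp _ _ le_rfl hlt ht.2)

theorem fDeriv_mul_general (X : Set ℂ)
    (F : Set PathData) (hF : Effective X F)
    (f₁ f₂ g₁ g₂ : ℂ → ℂ)
    (hg₁ : ContinuousOn g₁ X) (hg₂ : ContinuousOn g₂ X)
    (hd₁ : IsFDeriv F f₁ g₁) (hd₂ : IsFDeriv F f₂ g₂) :
    IsFDeriv F (fun x => f₁ x * f₂ x) (fun x => f₁ x * g₂ x + g₁ x * f₂ x) := by
  intro p hp
  have hpath : IsLipPathIn X p := (hF.1 p hp).1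
  refine (integral_congr fun t _ => by ring).trans
    (integral_mul_add_mul_eq_sub_of_integral_eq_sub hpath.1.le
      (hpath.intervalIntegrable_comp_mul_deriv hg₁) (hpath.intervalIntegrable_comp_mul_deriv hg₂)
      (fun t ht => hd₁.integral_eq_sub hF.2.1 hp ht) (fun t ht => hd₂.integral_eq_sub hF.2.1 hp ht))

/-- Product rule for `F`-derivatives. -/
theorem fDeriv_mul (X : Set ℂ) (hX : IsCompact X)
    (F : Set PathData) (hF : Effective X F)
    (f₁ f₂ g₁ g₂ : ℂ → ℂ)
    (hf₁ : ContinuousOn f₁ X) (hf₂ : ContinuousOn f₂ X)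
    (hg₁ : ContinuousOn g₁ X) (hg₂ : ContinuousOn g₂ X)
    (hd₁ : IsFDeriv F f₁ g₁) (hd₂ : IsFDeriv F f₂ g₂) :
    IsFDeriv F (fun x => f₁ x * f₂ x) (fun x => f₁ x * g₂ x + g₁ x * f₂ x) :=
  fDeriv_mul_general X F hF f₁ f₂ g₁ g₂ hg₁ hg₂ hd₁ hd₂
end

section
/- Let X ⊆ ℂ be a compact set and let F be an effective collection of Lipschitz paths in X. Let f, f₁, g, g₁ : ℂ → ℂ be continuous on X with f₁ an F-derivative of f, g₁ an F-derivative of g, and g(X) ⊆ X. Suppose that the pair (f, f₁) is a uniform limit of differentiable pairs: for every ε > 0 there exist h, h' : ℂ → ℂ with h' continuous on X and h having complex derivative h'(x) within X at every x ∈ X (HasDerivWithinAt h (h' x) X x), such that sup_{x∈X} |f(x) − h(x)| + sup_{x∈X} |f₁(x) − h'(x)| < ε (this holds in particular whenever D(X) is dense in D¹_F(X) for the norm ‖u‖ = sup_X|u| + sup_X|u^[1]|). Then (f₁ ∘ g)·g₁ is an F-derivative of f ∘ g. -/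
open Set intervalIntegral Filter

/-!
Along a path `γ ∈ F` on `[a, b]`, the `F`-derivative identities for `g` on subpaths say that
`G = g ∘ γ` is a primitive of the bounded function `(g₁ ∘ γ) · γ'`; hence `G` is Lipschitz and,
by Lebesgue's differentiation theorem, `G' = (g₁ ∘ γ) · γ'` almost everywhere.

For `h` with continuous derivative `h'` within `X`, the function `h ∘ G` is Lipschitz, and
`h ∘ G - ∫ (h' ∘ G) · G'` is absolutely continuous with vanishing derivative almost everywhere,
hence constant: `∫ (h' ∘ G) · G' = h (G b) - h (G a)`. Both sides are controlled by the sup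
norms, so the identity passes to the uniform limit `(f, f₁)` of such pairs `(h, h')`.
-/

open MeasureTheory Topology NNReal

section LipschitzCurves

variable {E : Type*} [NormedAddCommGroup E] [NormedSpace ℝ E] {a b : ℝ}

theorem LipschitzOnWith.ae_norm_deriv_le {γ : ℝ → E} {K : ℝ≥0}
    (hγ : LipschitzOnWith K γ (Icc a b)) :
    ∀ᵐ t, t ∈ Ioc a b → ‖deriv γ t‖ ≤ K := by
  filter_upwards [compl_mem_ae_iff.2 (measure_singleton b)] with t htb ht
  exact norm_deriv_le_of_lipschitzOn (Icc_mem_nhds ht.1 (lt_of_le_of_ne ht.2 htb)) hγ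

variable {𝕜 : Type*} [RCLike 𝕜]

theorem LipschitzOnWith.ae_norm_mul_deriv_le {γ u : ℝ → 𝕜} {K : ℝ≥0} {S : ℝ}
    (hγ : LipschitzOnWith K γ (Icc a b)) (hu : ∀ t ∈ Icc a b, ‖u t‖ ≤ S) :
    ∀ᵐ t, t ∈ Ioc a b → ‖u t * deriv γ t‖ ≤ S * K := by
  filter_upwards [hγ.ae_norm_deriv_le] with t ht hmem
  exact norm_mul_le_of_le (hu t (Ioc_subset_Icc_self hmem)) (ht hmem)

theorem LipschitzOnWith.intervalIntegrable_mul_deriv {γ u : ℝ → 𝕜} {K : ℝ≥0}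
    (hab : a ≤ b) (hγ : LipschitzOnWith K γ (Icc a b)) (hu : ContinuousOn u (Icc a b)) :
    IntervalIntegrable (fun t => u t * deriv γ t) volume a b := by
  rw [intervalIntegrable_iff_integrableOn_Ioc_of_le hab]
  exact (hu.integrableOn_Icc.mono_set Ioc_subset_Icc_self).mul_bdd
    (measurable_deriv γ).aestronglyMeasurable
    ((ae_restrict_iff' measurableSet_Ioc).2 hγ.ae_norm_deriv_le)

end LipschitzCurves

section Primitives

variable {E : Type*} [NormedAddCommGroup E] [NormedSpace ℝ E] {a b : ℝ} {G φ : ℝ → E}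

theorem lipschitzOnWith_of_integral_eq_sub {C : ℝ≥0}
    (hφ : ∀ᵐ t, t ∈ Ioc a b → ‖φ t‖ ≤ C)
    (hG : ∀ c d, a ≤ c → c ≤ d → d ≤ b → ∫ t in c..d, φ t = G d - G c) :
    LipschitzOnWith C G (Icc a b) := by
  refine LipschitzOnWith.of_dist_le_mul fun x hx y hy => ?_
  wlog hyx : y ≤ x generalizing x y
  · rw [dist_comm, dist_comm x]
    exact this y hy x hx (le_of_not_ge hyx)
  rw [dist_eq_norm, Real.dist_eq, ← hG y x hy.1 hyx hx.2]
  refine norm_integral_le_of_norm_le_const_ae ?_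
  filter_upwards [hφ] with t ht hmem
  rw [uIoc_of_le hyx] at hmem
  exact ht ⟨hy.1.trans_lt hmem.1, hmem.2.trans hx.2⟩

theorem ae_hasDerivAt_of_integral_eq_sub [CompleteSpace E]
    (hφ : IntervalIntegrable φ volume a b)
    (hG : ∀ c d, a ≤ c → c ≤ d → d ≤ b → ∫ t in c..d, φ t = G d - G c) :
    ∀ᵐ t, t ∈ Ioo a b → HasDerivAt G (φ t) t := by
  filter_upwards [hφ.ae_hasDerivAt_integral] with t ht hmem
  have hab : a ≤ b := hmem.1.le.trans hmem.2.le
  have hI := ht (by rw [uIcc_of_le hab]; exact Ioo_subset_Icc_self hmem) a left_mem_uIcc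
  refine (hI.const_add (G a)).congr_of_eventuallyEq ?_
  filter_upwards [Icc_mem_nhds hmem.1 hmem.2] with x hx
  rw [hG a x le_rfl hx.1 hx.2, add_sub_cancel]

end Primitives

theorem lipschitzOnWith_of_eventually_norm_sub_le {E : Type*} [NormedAddCommGroup E]
    {f : ℝ → E} {a b : ℝ} {C : ℝ≥0} (hf : ContinuousOn f (Icc a b))
    (hloc : ∀ x ∈ Ico a b, ∀ᶠ z in 𝓝[>] x, ‖f z - f x‖ ≤ C * (z - x)) :
    LipschitzOnWith C f (Icc a b) := by
  refine LipschitzOnWith.of_dist_le_mul fun x hx y hy => ?_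
  wlog hyx : y ≤ x generalizing x y
  · rw [dist_comm, dist_comm x]
    exact this y hy x hx (le_of_not_ge hyx)
  rw [dist_eq_norm, Real.dist_eq, abs_of_nonneg (sub_nonneg.2 hyx)]
  refine image_le_of_liminf_slope_right_le_deriv_boundary (a := y) (b := b)
    (f := fun z => ‖f z - f y‖) (B := fun z => C * (z - y)) (B' := fun _ => C)
    ((hf.mono (Icc_subset_Icc_left hy.1)).sub continuousOn_const).norm (by simp)
    (by fun_prop) (fun z _ => ?_) (fun z hz r hr => ?_) ⟨hyx, hx.2⟩
  · simpa using ((hasDerivAt_id z).sub_const y).const_mul (C : ℝ) |>.hasDerivWithinAt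
  · refine (((hloc z ⟨hy.1.trans hz.1, hz.2⟩).and self_mem_nhdsWithin).mono
      fun w ⟨hw, hzw⟩ => ?_).frequently
    have hzw : 0 < w - z := sub_pos.2 hzw
    rw [slope_def_field, div_lt_iff₀ hzw]
    calc ‖f w - f y‖ - ‖f z - f y‖ ≤ ‖f w - f z‖ := by
          simpa using norm_sub_norm_le (f w - f y) (f z - f y)
      _ ≤ C * (w - z) := hw
      _ < r * (w - z) := by gcongr

section ChainRule

variable {𝕜 : Type*} [RCLike 𝕜] {X : Set 𝕜} {h h' : 𝕜 → 𝕜} {G : ℝ → 𝕜} {a b : ℝ}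
  {L : ℝ≥0}

/- `X` need not be convex, so `h` need not be Lipschitz on `X`; the bound comes from
differentiability at each point `G x`, seen from the right along the curve. -/
theorem LipschitzOnWith.comp_of_hasDerivWithinAt (hd : ∀ x ∈ X, HasDerivWithinAt h (h' x) X x)
    (hG : LipschitzOnWith L G (Icc a b)) (hGX : MapsTo G (Icc a b) X) {M : ℝ≥0}
    (hM : ∀ t ∈ Icc a b, ‖h' (G t)‖ ≤ M) :
    LipschitzOnWith ((M + 1) * L) (fun t => h (G t)) (Icc a b) := by
  have hGc := hG.continuousOn
  refine lipschitzOnWith_of_eventually_norm_sub_le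
    ((HasDerivWithinAt.continuousOn hd).comp hGc hGX) fun x hx => ?_
  have hxI : x ∈ Icc a b := Ico_subset_Icc_self hx
  have hIoo : Ioo x b ∈ 𝓝[>] x := Ioo_mem_nhdsGT hx.2
  have hGt : Tendsto G (𝓝[>] x) (𝓝[X] (G x)) := by
    refine tendsto_nhdsWithin_iff.2
      ⟨(hGc x hxI).tendsto.mono_left (nhdsWithin_le_of_mem ?_), ?_⟩
    · exact mem_of_superset hIoo fun z hz => ⟨hx.1.trans hz.1.le, hz.2.le⟩
    · filter_upwards [hIoo] with z hz using hGX ⟨hx.1.trans hz.1.le, hz.2.le⟩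
  have hlin := (hasDerivWithinAt_iff_isLittleO.1 (hd _ (hGX hxI))).def one_pos
  filter_upwards [hGt.eventually hlin, hIoo] with z hz hzI
  have hGz : ‖G z - G x‖ ≤ L * (z - x) := by
    simpa [dist_eq_norm, Real.dist_eq, abs_of_pos (sub_pos.2 hzI.1)] using
      hG.dist_le_mul z ⟨hx.1.trans hzI.1.le, hzI.2.le⟩ x hxI
  calc ‖h (G z) - h (G x)‖
      ≤ ‖h (G z) - h (G x) - (G z - G x) • h' (G x)‖ + ‖(G z - G x) • h' (G x)‖ :=
        norm_le_norm_sub_add _ _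
    _ ≤ (M + 1) * ‖G z - G x‖ := by
        rw [norm_smul]
        nlinarith [hM x hxI, norm_nonneg (G z - G x)]
    _ ≤ ((M + 1) * L : ℝ≥0) * (z - x) := by
        push_cast
        rw [mul_assoc]
        gcongr

theorem integral_comp_mul_deriv_eq_sub (hh' : ContinuousOn h' X)
    (hd : ∀ x ∈ X, HasDerivWithinAt h (h' x) X x) (hab : a ≤ b)
    (hG : LipschitzOnWith L G (Icc a b)) (hGX : MapsTo G (Icc a b) X) :
    ∫ t in a..b, h' (G t) * deriv G t = h (G b) - h (G a) := by
  set ψ := fun t => h' (G t) * deriv G t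
  have hcont : ContinuousOn (fun t => h' (G t)) (Icc a b) := hh'.comp hG.continuousOn hGX
  obtain ⟨M, hM⟩ := isCompact_Icc.exists_bound_of_continuousOn hcont
  replace hM : ∀ t ∈ Icc a b, ‖h' (G t)‖ ≤ M.toNNReal := fun t ht =>
    (hM t ht).trans (Real.le_coe_toNNReal M)
  have hψ : IntervalIntegrable ψ volume a b := hG.intervalIntegrable_mul_deriv hab hcont
  have hH := hG.comp_of_hasDerivWithinAt hd hGX hM
  have hI : LipschitzOnWith (M.toNNReal * L) (fun t => ∫ s in a..t, ψ s) (Icc a b) := by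
    refine lipschitzOnWith_of_integral_eq_sub
      (by rw [NNReal.coe_mul]; exact hG.ae_norm_mul_deriv_le hM)
      fun c d hc hcd hd => (integral_interval_sub_left ?_ ?_).symm
    · exact hψ.mono_set (by
        rw [uIcc_of_le hab, uIcc_of_le (hc.trans hcd)]; exact Icc_subset_Icc le_rfl hd)
    · exact hψ.mono_set (by
        rw [uIcc_of_le hab, uIcc_of_le hc]; exact Icc_subset_Icc le_rfl (hcd.trans hd))
  rw [← uIcc_of_le hab] at hH hI hG
  have hK0 : ∀ᵐ t, t ∈ uIcc a b →
      HasDerivAt ((fun t => h (G t)) - fun t => ∫ s in a..t, ψ s) 0 t := by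
    filter_upwards [hψ.ae_hasDerivAt_integral,
      hG.absolutelyContinuousOnInterval.boundedVariationOn.ae_differentiableAt_of_mem_uIcc,
      compl_mem_ae_iff.2 (measure_singleton a), compl_mem_ae_iff.2 (measure_singleton b)]
      with t hψt hGt hta htb ht
    have htI : Icc a b ∈ 𝓝 t := by
      rw [uIcc_of_le hab] at ht
      exact Icc_mem_nhds (lt_of_le_of_ne ht.1 (Ne.symm hta)) (lt_of_le_of_ne ht.2 htb)
    have hHt : HasDerivAt (fun t => h (G t)) (ψ t) t :=
      ((hd _ (hGX (mem_of_mem_nhds htI))).comp t (hGt ht).hasDerivAt.hasDerivWithinAt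
        hGX).hasDerivAt htI
    exact sub_self (ψ t) ▸ hHt.sub (hψt ht a left_mem_uIcc)
  obtain ⟨C, hC⟩ := (hH.absolutelyContinuousOnInterval.sub
    hI.absolutelyContinuousOnInterval).const_of_ae_hasDerivAt_zero hK0
  have := (hC b right_mem_uIcc).trans (hC a left_mem_uIcc).symm
  simp only [Pi.sub_apply, intervalIntegral.integral_same, sub_zero] at this
  rw [← this]
  abel

end ChainRule

theorem supOn_nonneg (u : ℂ → ℂ) (X : Set ℂ) : 0 ≤ supOn u X :=
  Real.sSup_nonneg (by rintro _ ⟨x, -, rfl⟩; exact norm_nonneg _)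

theorem norm_le_supOn {X : Set ℂ} (hX : IsCompact X) {u : ℂ → ℂ} (hu : ContinuousOn u X)
    {x : ℂ} (hx : x ∈ X) : ‖u x‖ ≤ supOn u X :=
  le_csSup (hX.image_of_continuousOn hu.norm).bddAbove ⟨x, hx, rfl⟩

theorem integral_comp_mul_deriv_eq_sub_of_approx {X : Set ℂ} (hX : IsCompact X)
    {f f₁ : ℂ → ℂ} (hf : ContinuousOn f X) (hf₁ : ContinuousOn f₁ X)
    (happrox : ∀ ε > (0:ℝ), ∃ h h' : ℂ → ℂ, ContinuousOn h' X ∧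
      (∀ x ∈ X, HasDerivWithinAt h (h' x) X x) ∧
      supOn (fun x => f x - h x) X + supOn (fun x => f₁ x - h' x) X < ε)
    {G : ℝ → ℂ} {a b : ℝ} {L : ℝ≥0} (hab : a ≤ b) (hG : LipschitzOnWith L G (Icc a b))
    (hGX : MapsTo G (Icc a b) X) :
    ∫ t in a..b, f₁ (G t) * deriv G t = f (G b) - f (G a) := by
  set A := (∫ t in a..b, f₁ (G t) * deriv G t) - (f (G b) - f (G a))
  suffices hA : ∀ ε > (0:ℝ), ‖A‖ ≤ ε * (L * (b - a) + 2) by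
    have hlim : Tendsto (fun ε : ℝ => ε * (L * (b - a) + 2)) (𝓝[>] 0) (𝓝 0) := by
      simpa using (continuous_mul_const (L * (b - a) + 2 : ℝ)).continuousWithinAt
        (s := Ioi 0) (x := 0) |>.tendsto
    exact sub_eq_zero.1 (norm_le_zero_iff.1
      (ge_of_tendsto hlim (eventually_nhdsWithin_of_forall hA)))
  intro ε hε
  obtain ⟨h, h', hh', hd, hsum⟩ := happrox ε hε
  have hfh : ∀ x ∈ X, ‖f x - h x‖ ≤ ε := fun x hx =>
    (norm_le_supOn (u := fun x => f x - h x) hX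
      (hf.sub (HasDerivWithinAt.continuousOn hd)) hx).trans
      (by linarith [supOn_nonneg (fun x => f₁ x - h' x) X])
  have hfh₁ : ∀ x ∈ X, ‖f₁ x - h' x‖ ≤ ε := fun x hx =>
    (norm_le_supOn (u := fun x => f₁ x - h' x) hX (hf₁.sub hh') hx).trans
      (by linarith [supOn_nonneg (fun x => f x - h x) X])
  have hGc := hG.continuousOn
  have hsplit : A = (∫ t in a..b, (f₁ (G t) - h' (G t)) * deriv G t)
      - ((f (G b) - h (G b)) - (f (G a) - h (G a))) := by
    simp only [A, sub_mul]
    rw [intervalIntegral.integral_sub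
      (hG.intervalIntegrable_mul_deriv (u := fun t => f₁ (G t)) hab (hf₁.comp hGc hGX))
      (hG.intervalIntegrable_mul_deriv (u := fun t => h' (G t)) hab (hh'.comp hGc hGX)),
      integral_comp_mul_deriv_eq_sub hh' hd hab hG hGX]
    ring
  have hint : ‖∫ t in a..b, (f₁ (G t) - h' (G t)) * deriv G t‖ ≤ ε * L * (b - a) := by
    have := norm_integral_le_of_norm_le_const_ae (a := a) (b := b) (by
      rw [uIoc_of_le hab]
      exact hG.ae_norm_mul_deriv_le fun t ht => hfh₁ _ (hGX ht))
    rwa [abs_of_nonneg (sub_nonneg.2 hab)] at this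
  have hends : ‖(f (G b) - h (G b)) - (f (G a) - h (G a))‖ ≤ ε + ε :=
    (norm_sub_le _ _).trans (add_le_add (hfh _ (hGX (right_mem_Icc.2 hab)))
      (hfh _ (hGX (left_mem_Icc.2 hab))))
  rw [hsplit]
  calc _ ≤ _ := norm_sub_le _ _
    _ ≤ ε * L * (b - a) + (ε + ε) := add_le_add hint hends
    _ = ε * (L * (b - a) + 2) := by ring

theorem IsFDeriv.isPathDeriv {F : Set PathData} (hF : ClosedUnderSubpaths F) {f g : ℂ → ℂ}
    (hfg : IsFDeriv F f g) {p : PathData} (hp : p ∈ F) : IsPathDeriv p.1 p.2.1 p.2.2 f g := by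
  intro c d hc hcd hd
  rcases hcd.eq_or_lt with rfl | hcd
  · simp
  · exact hfg _ (hF p hp c d hc hcd hd)

theorem fDeriv_comp_of_dense_general (X : Set ℂ) (hX : IsCompact X)
    (F : Set PathData) (hF : Effective X F)
    (f f₁ g g₁ : ℂ → ℂ)
    (hf : ContinuousOn f X) (hf₁ : ContinuousOn f₁ X)
    (hg₁ : ContinuousOn g₁ X)
    (hgd : IsFDeriv F g g₁)
    (hgX : g '' X ⊆ X)
    (happrox : ∀ ε > (0:ℝ), ∃ h h' : ℂ → ℂ, ContinuousOn h' X ∧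
      (∀ x ∈ X, HasDerivWithinAt h (h' x) X x) ∧
      supOn (fun x => f x - h x) X + supOn (fun x => f₁ x - h' x) X < ε) :
    IsFDeriv F (fun x => f (g x)) (fun x => f₁ (g x) * g₁ x) := by
  intro p hp
  obtain ⟨⟨hab, ⟨K, hγ⟩, hγX⟩, -⟩ := hF.1 p hp
  obtain ⟨γ, a, b⟩ := p
  replace hγX : MapsTo γ (Icc a b) X := mapsTo_iff_image_subset.2 hγX
  obtain ⟨S, hS⟩ := hX.exists_bound_of_continuousOn hg₁
  have hpath : IsPathDeriv γ a b g g₁ := hgd.isPathDeriv hF.2.1 hp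
  have hG : LipschitzOnWith (S.toNNReal * K) (fun t => g (γ t)) (Icc a b) :=
    lipschitzOnWith_of_integral_eq_sub (by
      rw [NNReal.coe_mul]
      exact hγ.ae_norm_mul_deriv_le fun t ht => (hS _ (hγX ht)).trans (Real.le_coe_toNNReal S))
      hpath
  have hderiv := ae_hasDerivAt_of_integral_eq_sub (hγ.intervalIntegrable_mul_deriv
    (u := fun t => g₁ (γ t)) hab.le (hg₁.comp hγ.continuousOn hγX)) hpath
  show ∫ t in a..b, f₁ (g (γ t)) * g₁ (γ t) * deriv γ t = f (g (γ b)) - f (g (γ a))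
  rw [← integral_comp_mul_deriv_eq_sub_of_approx hX hf hf₁ happrox hab.le hG
    ((mapsTo_iff_image_subset.2 hgX).comp hγX)]
  refine intervalIntegral.integral_congr_ae ?_
  filter_upwards [hderiv, compl_mem_ae_iff.2 (measure_singleton b)] with t ht htb hmem
  rw [uIoc_of_le hab.le] at hmem
  rw [(ht ⟨hmem.1, lt_of_le_of_ne hmem.2 htb⟩).deriv, mul_assoc]

/-- If `(f, f₁)` is a uniform limit of pairs `(h, h')` where `h` is
differentiable on `X` with continuous derivative `h'` (e.g. if `D(X)` is dense in
`D¹_F(X)`), and `g(X) ⊆ X`, then the chain rule holds: `(f₁ ∘ g)·g₁` is an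
`F`-derivative of `f ∘ g`. -/
theorem fDeriv_comp_of_dense (X : Set ℂ) (hX : IsCompact X)
    (F : Set PathData) (hF : Effective X F)
    (f f₁ g g₁ : ℂ → ℂ)
    (hf : ContinuousOn f X) (hf₁ : ContinuousOn f₁ X)
    (hg : ContinuousOn g X) (hg₁ : ContinuousOn g₁ X)
    (hfd : IsFDeriv F f f₁) (hgd : IsFDeriv F g g₁)
    (hgX : g '' X ⊆ X)
    (happrox : ∀ ε > (0:ℝ), ∃ h h' : ℂ → ℂ, ContinuousOn h' X ∧
      (∀ x ∈ X, HasDerivWithinAt h (h' x) X x) ∧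
      supOn (fun x => f x - h x) X + supOn (fun x => f₁ x - h' x) X < ε) :
    IsFDeriv F (fun x => f (g x)) (fun x => f₁ (g x) * g₁ x) :=
  fDeriv_comp_of_dense_general X hX F hF f f₁ g g₁ hf hf₁ hg₁ hgd hgX happrox
end
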